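/- arXiv:2102.05789 — 4 statements merged into one kernel-verified Lean document; each statement's English description precedes it below -/
import Mathlib

section
/- Let g : [0,∞) → [0,∞) be a probability density function and τ > 0. If γ : [0,∞) → [0,1] is measurable and satisfies ∫₀^∞ g(x)γ(x) dx ≥ ∫₀^τ g(x) dx, then ∫₀^∞ x g(x) γ(x) dx ≥ ∫₀^τ x g(x) dx. -/
open MeasureTheory Set

theorem stmt0 (g γ : ℝ → ℝ) (τ : ℝ) (hτ : 0 < τ)
    (hg : ∀ x, 0 ≤ g x)
    (hgint : IntegrableOn g (Ici 0))
    (hgdens : ∫ x in Ici (0:ℝ), g x = 1)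
    (hγm : Measurable γ) (hγ : ∀ x, γ x ∈ Icc (0:ℝ) 1)
    (hint1 : IntegrableOn (fun x => g x * γ x) (Ici 0))
    (hint2 : IntegrableOn (fun x => x * g x * γ x) (Ici 0))
    (hint3 : IntegrableOn (fun x => x * g x) (Ici 0))
    (hcon : (∫ x in Ici (0:ℝ), g x * γ x) ≥ ∫ x in Icc (0:ℝ) τ, g x) :
    (∫ x in Ici (0:ℝ), x * g x * γ x) ≥ ∫ x in Icc (0:ℝ) τ, x * g x := by
  have hsub1 : Icc (0:ℝ) τ ⊆ Ici 0 := Icc_subset_Ici_self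
  have hsub2 : Ioi τ ⊆ Ici (0:ℝ) := fun x hx => (hτ.trans hx).le
  have hA1 : IntegrableOn (fun x => x * g x * γ x) (Icc 0 τ) := hint2.mono_set hsub1
  have hA2 : IntegrableOn (fun x => g x * γ x) (Icc 0 τ) := hint1.mono_set hsub1
  have hA3 : IntegrableOn (fun x => x * g x) (Icc 0 τ) := hint3.mono_set hsub1
  have hA4 : IntegrableOn g (Icc 0 τ) := hgint.mono_set hsub1
  have hB1 : IntegrableOn (fun x => x * g x * γ x) (Ioi τ) := hint2.mono_set hsub2
  have hB2 : IntegrableOn (fun x => g x * γ x) (Ioi τ) := hint1.mono_set hsub2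
  have hunion : Icc (0:ℝ) τ ∪ Ioi τ = Ici 0 := Icc_union_Ioi_eq_Ici hτ.le
  have hdisj : Disjoint (Icc (0:ℝ) τ) (Ioi τ) :=
    disjoint_left.2 fun x hx hx' => absurd hx.2 (not_le.2 hx')
  have hsplit1 : ∫ x in Ici (0:ℝ), x * g x * γ x
      = (∫ x in Icc (0:ℝ) τ, x * g x * γ x) + ∫ x in Ioi τ, x * g x * γ x := by
    rw [← hunion, setIntegral_union hdisj measurableSet_Ioi hA1 hB1]
  have hsplit2 : ∫ x in Ici (0:ℝ), g x * γ x
      = (∫ x in Icc (0:ℝ) τ, g x * γ x) + ∫ x in Ioi τ, g x * γ x := by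
    rw [← hunion, setIntegral_union hdisj measurableSet_Ioi hA2 hB2]
  have key1 : (∫ x in Icc (0:ℝ) τ, x * g x * γ x) - (∫ x in Icc (0:ℝ) τ, x * g x)
      ≥ τ * ((∫ x in Icc (0:ℝ) τ, g x * γ x) - ∫ x in Icc (0:ℝ) τ, g x) := by
    have h0 : (0:ℝ) ≤ ∫ x in Icc (0:ℝ) τ, (x - τ) * g x * (γ x - 1) := by
      apply setIntegral_nonneg measurableSet_Icc
      intro x hx
      nlinarith [mul_nonneg (mul_nonneg (sub_nonneg.2 hx.2) (hg x)) (sub_nonneg.2 (hγ x).2)]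
    have heq : (∫ x in Icc (0:ℝ) τ, (x - τ) * g x * (γ x - 1))
        = ((∫ x in Icc (0:ℝ) τ, x * g x * γ x) - ∫ x in Icc (0:ℝ) τ, x * g x)
          - τ * ((∫ x in Icc (0:ℝ) τ, g x * γ x) - ∫ x in Icc (0:ℝ) τ, g x) := by
      have hfun : (fun x => (x - τ) * g x * (γ x - 1))
          = fun x => (x * g x * γ x - x * g x) - (τ * (g x * γ x) - τ * g x) := by
        funext x; ring
      have hI1 : IntegrableOn (fun x => x * g x * γ x - x * g x) (Icc 0 τ) := hA1.sub hA3
      have hI2 : IntegrableOn (fun x => τ * (g x * γ x) - τ * g x) (Icc 0 τ) :=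
        (hA2.const_mul τ).sub (hA4.const_mul τ)
      rw [hfun, integral_sub hI1 hI2,
        integral_sub hA1 hA3, integral_sub (hA2.const_mul τ) (hA4.const_mul τ),
        integral_const_mul, integral_const_mul]
      ring
    linarith [heq ▸ h0]
  have key2 : (∫ x in Ioi τ, x * g x * γ x) ≥ τ * ∫ x in Ioi τ, g x * γ x := by
    rw [← integral_const_mul]
    apply setIntegral_mono_on (hB2.const_mul τ) hB1 measurableSet_Ioi
    intro x hx
    nlinarith [mul_nonneg (mul_nonneg (sub_nonneg.2 (le_of_lt (hx : τ < x))) (hg x)) ((hγ x).1)]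
  have hpos : 0 ≤ τ * ((∫ x in Ici (0:ℝ), g x * γ x) - ∫ x in Icc (0:ℝ) τ, g x) :=
    mul_nonneg hτ.le (by linarith)
  rw [hsplit2] at hpos
  rw [hsplit1]
  linarith [key1, key2, hpos]
end

section
/- Let g : [0,∞) → [0,∞) be a probability density and τ > 0. If γ : [0,∞) → [0,1] is measurable and satisfies ∫₀^∞ x g(x) γ(x) dx ≤ ∫₀^τ x g(x) dx, then ∫₀^∞ g(x) γ(x) dx ≤ ∫₀^τ g(x) dx. -/
open MeasureTheory Set

theorem stmt1 (g γ : ℝ → ℝ) (τ : ℝ) (hτ : 0 < τ)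
    (hg : ∀ x, 0 ≤ g x)
    (hgint : IntegrableOn g (Ici 0))
    (hgdens : ∫ x in Ici (0:ℝ), g x = 1)
    (hγm : Measurable γ) (hγ : ∀ x, γ x ∈ Icc (0:ℝ) 1)
    (hint1 : IntegrableOn (fun x => g x * γ x) (Ici 0))
    (hint2 : IntegrableOn (fun x => x * g x * γ x) (Ici 0))
    (hint3 : IntegrableOn (fun x => x * g x) (Ici 0))
    (hcon : (∫ x in Ici (0:ℝ), x * g x * γ x) ≤ ∫ x in Icc (0:ℝ) τ, x * g x) :
    (∫ x in Ici (0:ℝ), g x * γ x) ≤ ∫ x in Icc (0:ℝ) τ, g x := by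
  have hAsub : Icc (0:ℝ) τ ⊆ Ici 0 := Icc_subset_Ici_self
  have hBsub : Ioi τ ⊆ Ici (0:ℝ) := fun x hx => le_of_lt (lt_trans hτ hx)
  have hdisj : Disjoint (Icc (0:ℝ) τ) (Ioi τ) := by
    rw [Set.disjoint_left]
    intro x hx hx'
    exact absurd hx' (not_lt.mpr hx.2)
  have hunion : Icc (0:ℝ) τ ∪ Ioi τ = Ici 0 := Icc_union_Ioi_eq_Ici hτ.le
  have hsplit : ∀ f : ℝ → ℝ, IntegrableOn f (Ici 0) →
      (∫ x in Ici (0:ℝ), f x) = (∫ x in Icc (0:ℝ) τ, f x) + ∫ x in Ioi τ, f x := by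
    intro f hf
    rw [← hunion]
    exact setIntegral_union hdisj measurableSet_Ioi (hf.mono_set hAsub) (hf.mono_set hBsub)
  have hgA := hgint.mono_set hAsub
  have h1A := hint1.mono_set hAsub
  have h1B := hint1.mono_set hBsub
  have h2A := hint2.mono_set hAsub
  have h2B := hint2.mono_set hBsub
  have h3A := hint3.mono_set hAsub
  have e1 := hsplit _ hint1
  have e2 := hsplit _ hint2
  -- on B : τ * (g γ) ≤ x g γ
  have keyB : τ * (∫ x in Ioi τ, g x * γ x) ≤ ∫ x in Ioi τ, x * g x * γ x := by
    rw [← integral_const_mul]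
    apply setIntegral_mono_on (h1B.const_mul τ) h2B measurableSet_Ioi
    intro x hx
    have hγx := hγ x
    have : τ * (g x * γ x) ≤ x * (g x * γ x) :=
      mul_le_mul_of_nonneg_right (le_of_lt hx) (mul_nonneg (hg x) hγx.1)
    linarith
  -- on A : x g (1-γ) ≤ τ g (1-γ)
  have keyA : (∫ x in Icc (0:ℝ) τ, (x * g x - x * g x * γ x)) ≤
      τ * ∫ x in Icc (0:ℝ) τ, (g x - g x * γ x) := by
    rw [← integral_const_mul]
    apply setIntegral_mono_on (h3A.sub h2A) ((hgA.sub h1A).const_mul τ) measurableSet_Icc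
    intro x hx
    have hγx := hγ x
    have h1 : 0 ≤ 1 - γ x := by linarith [hγx.2]
    have : x * (g x * (1 - γ x)) ≤ τ * (g x * (1 - γ x)) :=
      mul_le_mul_of_nonneg_right hx.2 (mul_nonneg (hg x) h1)
    simp only [Pi.sub_apply]
    nlinarith [this]
  have esubA : (∫ x in Icc (0:ℝ) τ, (x * g x - x * g x * γ x)) =
      (∫ x in Icc (0:ℝ) τ, x * g x) - ∫ x in Icc (0:ℝ) τ, x * g x * γ x :=
    integral_sub h3A h2A
  have esubA' : (∫ x in Icc (0:ℝ) τ, (g x - g x * γ x)) =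
      (∫ x in Icc (0:ℝ) τ, g x) - ∫ x in Icc (0:ℝ) τ, g x * γ x :=
    integral_sub hgA h1A
  have hBbound : (∫ x in Ioi τ, x * g x * γ x) ≤
      (∫ x in Icc (0:ℝ) τ, x * g x) - ∫ x in Icc (0:ℝ) τ, x * g x * γ x := by
    linarith [hcon, e2]
  have final : τ * (∫ x in Ioi τ, g x * γ x) ≤
      τ * ((∫ x in Icc (0:ℝ) τ, g x) - ∫ x in Icc (0:ℝ) τ, g x * γ x) := by
    calc τ * (∫ x in Ioi τ, g x * γ x) ≤ ∫ x in Ioi τ, x * g x * γ x := keyB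
      _ ≤ (∫ x in Icc (0:ℝ) τ, x * g x) - ∫ x in Icc (0:ℝ) τ, x * g x * γ x := hBbound
      _ = ∫ x in Icc (0:ℝ) τ, (x * g x - x * g x * γ x) := esubA.symm
      _ ≤ τ * ∫ x in Icc (0:ℝ) τ, (g x - g x * γ x) := keyA
      _ = _ := by rw [esubA']
  have := le_of_mul_le_mul_left (by linarith [final] : τ * (∫ x in Ioi τ, g x * γ x) ≤ τ * ((∫ x in Icc (0:ℝ) τ, g x) - ∫ x in Icc (0:ℝ) τ, g x * γ x)) hτ
  linarith [e1, this]
end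

section
/- Let g be a probability density on [0,∞), τ > 0, and γ : [0,∞) → [0,1] measurable. If ∫₀^∞ g(x)γ(x) dx ≥ ∫₀^τ g(x) dx and ∫₀^∞ x g(x) γ(x) dx ≤ ∫₀^τ x g(x) dx, and g(x) > 0 for almost every x, then γ(x) = 1{x ≤ τ} for almost every x. -/
open MeasureTheory Set

/-! The weight `(τ - x) * (γ x - 1{x ≤ τ})` is nonpositive everywhere, since `γ` can only lose
mass below `τ` and gain it above `τ`. Integrated against `g`, it gives
`τ * (mass excess) + (first-moment deficit) ≥ 0`, so `g` times the weight vanishes a.e.; as `g > 0`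
a.e. and `{τ}` is null, `γ` coincides a.e. with the indicator of `x ≤ τ`. -/

theorem ae_eq_zero_of_nonpos_of_integral_nonneg {α : Type*} [MeasurableSpace α] {μ : Measure α}
    {f : α → ℝ} (hfi : Integrable f μ) (hf : f ≤ᵐ[μ] 0) (h : 0 ≤ ∫ x, f x ∂μ) : f =ᵐ[μ] 0 := by
  have hneg : 0 ≤ᵐ[μ] -f := by filter_upwards [hf] with x hx using neg_nonneg.2 hx
  have hzero : ∫ x, (-f) x ∂μ = 0 := by
    simp only [Pi.neg_apply, integral_neg, neg_eq_zero]
    exact le_antisymm (integral_nonpos_of_ae hf) h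
  filter_upwards [(integral_eq_zero_iff_of_nonneg_ae hneg hfi.neg).1 hzero] with x hx
  simpa using hx

theorem sub_mul_sub_indicator_Iic_nonpos {τ x c : ℝ} (hc : c ∈ Icc (0:ℝ) 1) :
    (τ - x) * (c - (Iic τ).indicator 1 x) ≤ 0 := by
  by_cases hx : x ≤ τ
  · simp only [indicator_of_mem (mem_Iic.2 hx), Pi.one_apply]
    exact mul_nonpos_of_nonneg_of_nonpos (sub_nonneg.2 hx) (sub_nonpos.2 hc.2)
  · simp only [indicator_of_notMem (mt mem_Iic.1 hx), sub_zero]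
    exact mul_nonpos_of_nonpos_of_nonneg (by linarith [not_le.1 hx]) hc.1

theorem ae_mul_sub_indicator_Iic_eq_zero {μ : Measure ℝ} {g γ : ℝ → ℝ} {τ : ℝ} (hτ : 0 ≤ τ)
    (hg : ∀ x, 0 ≤ g x) (hγ : ∀ x, γ x ∈ Icc (0:ℝ) 1)
    (hgi : Integrable g μ) (hxg : Integrable (fun x => x * g x) μ)
    (hgγ : Integrable (fun x => g x * γ x) μ) (hxgγ : Integrable (fun x => x * g x * γ x) μ)
    (hmass : ∫ x in Iic τ, g x ∂μ ≤ ∫ x, g x * γ x ∂μ)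
    (hmoment : ∫ x, x * g x * γ x ∂μ ≤ ∫ x in Iic τ, x * g x ∂μ) :
    ∀ᵐ x ∂μ, g x * ((τ - x) * (γ x - (Iic τ).indicator 1 x)) = 0 := by
  have hsplit : (fun x => g x * ((τ - x) * (γ x - (Iic τ).indicator 1 x))) =
      fun x => (τ * (g x * γ x) - x * g x * γ x) -
        (Iic τ).indicator (fun x => τ * g x - x * g x) x := by
    funext x
    by_cases hx : x ≤ τ <;>
      simp only [indicator_apply, mem_Iic, hx, if_true, if_false, Pi.one_apply] <;> ring
  have hτgγ : Integrable (fun x => τ * (g x * γ x)) μ := hgγ.const_mul τ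
  have hγpart : Integrable (fun x => τ * (g x * γ x) - x * g x * γ x) μ := hτgγ.sub hxgγ
  have hind : Integrable ((Iic τ).indicator fun x => τ * g x - x * g x) μ :=
    ((hgi.const_mul τ).sub hxg).indicator measurableSet_Iic
  refine ae_eq_zero_of_nonpos_of_integral_nonneg ?_ ?_ ?_
  · rw [hsplit]; exact hγpart.sub hind
  · exact Filter.Eventually.of_forall fun x =>
      mul_nonpos_of_nonneg_of_nonpos (hg x) (sub_mul_sub_indicator_Iic_nonpos (hγ x))
  · rw [hsplit, integral_sub hγpart hind, integral_sub hτgγ hxgγ, integral_const_mul,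
      integral_indicator measurableSet_Iic,
      integral_sub (hgi.const_mul τ).integrableOn hxg.integrableOn, integral_const_mul]
    have := mul_le_mul_of_nonneg_left hmass hτ
    linarith

theorem stmt2_general (g γ : ℝ → ℝ) (τ : ℝ) (hτ : 0 < τ)
    (hg : ∀ x, 0 ≤ g x)
    (hgint : IntegrableOn g (Ici 0))
    (hgpos : ∀ᵐ x ∂(volume.restrict (Ici (0:ℝ))), 0 < g x)
    (hγ : ∀ x, γ x ∈ Icc (0:ℝ) 1)
    (hint1 : IntegrableOn (fun x => g x * γ x) (Ici 0))
    (hint2 : IntegrableOn (fun x => x * g x * γ x) (Ici 0))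
    (hint3 : IntegrableOn (fun x => x * g x) (Ici 0))
    (hcon1 : (∫ x in Ici (0:ℝ), g x * γ x) ≥ ∫ x in Icc (0:ℝ) τ, g x)
    (hcon2 : (∫ x in Ici (0:ℝ), x * g x * γ x) ≤ ∫ x in Icc (0:ℝ) τ, x * g x) :
    ∀ᵐ x ∂(volume.restrict (Ici (0:ℝ))), γ x = if x ≤ τ then 1 else 0 := by
  have hIcc : (volume.restrict (Ici (0:ℝ))).restrict (Iic τ) = volume.restrict (Icc 0 τ) := by
    rw [Measure.restrict_restrict measurableSet_Iic, Iic_inter_Ici]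
  have hzero := ae_mul_sub_indicator_Iic_eq_zero hτ.le hg hγ hgint hint3 hint1 hint2
    (by rwa [hIcc]) (by rwa [hIcc])
  filter_upwards [hzero, hgpos, Measure.ae_ne _ τ] with x hx hgx hxτ
  have hweight := (mul_eq_zero.1 hx).resolve_left hgx.ne'
  have hγx := sub_eq_zero.1 <| (mul_eq_zero.1 hweight).resolve_left (sub_ne_zero.2 hxτ.symm)
  simpa [indicator_apply] using hγx

theorem stmt2 (g γ : ℝ → ℝ) (τ : ℝ) (hτ : 0 < τ)
    (hg : ∀ x, 0 ≤ g x)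
    (hgint : IntegrableOn g (Ici 0))
    (hgdens : ∫ x in Ici (0:ℝ), g x = 1)
    (hgpos : ∀ᵐ x ∂(volume.restrict (Ici (0:ℝ))), 0 < g x)
    (hγm : Measurable γ) (hγ : ∀ x, γ x ∈ Icc (0:ℝ) 1)
    (hint1 : IntegrableOn (fun x => g x * γ x) (Ici 0))
    (hint2 : IntegrableOn (fun x => x * g x * γ x) (Ici 0))
    (hint3 : IntegrableOn (fun x => x * g x) (Ici 0))
    (hcon1 : (∫ x in Ici (0:ℝ), g x * γ x) ≥ ∫ x in Icc (0:ℝ) τ, g x)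
    (hcon2 : (∫ x in Ici (0:ℝ), x * g x * γ x) ≤ ∫ x in Icc (0:ℝ) τ, x * g x) :
    ∀ᵐ x ∂(volume.restrict (Ici (0:ℝ))), γ x = if x ≤ τ then 1 else 0 :=
  stmt2_general g γ τ hτ hg hgint hgpos hγ hint1 hint2 hint3 hcon1 hcon2
end

section
/- Let g be a probability density on [0,∞) with finite mean, τ > 0, and λ > 0. The optimization problem: maximize λ ∫₀^∞ g(x) γ(x) dx over measurable γ : [0,∞) → [0,1] subject to ∫₀^∞ x g(x) γ(x) dx ≤ ∫₀^τ x g(x) dx, has optimal value λ ∫₀^τ g(x) dx, attained by γ*(x) = 1{x ≤ τ}. -/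
open MeasureTheory Set

theorem stmt14 (g : ℝ → ℝ) (τ lam : ℝ) (hτ : 0 < τ) (hlam : 0 < lam)
    (hg : ∀ x, 0 ≤ g x)
    (hgint : IntegrableOn g (Ici 0))
    (hgdens : ∫ x in Ici (0:ℝ), g x = 1)
    (hxgint : IntegrableOn (fun x => x * g x) (Ici 0)) :
    (∀ γ : ℝ → ℝ, Measurable γ → (∀ x, γ x ∈ Icc (0:ℝ) 1) →
        IntegrableOn (fun x => g x * γ x) (Ici 0) →
        IntegrableOn (fun x => x * g x * γ x) (Ici 0) →
        (∫ x in Ici (0:ℝ), x * g x * γ x) ≤ (∫ x in Icc (0:ℝ) τ, x * g x) →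
        lam * ∫ x in Ici (0:ℝ), g x * γ x ≤ lam * ∫ x in Icc (0:ℝ) τ, g x) ∧
      (∫ x in Ici (0:ℝ), x * g x * (if x ≤ τ then (1:ℝ) else 0)) ≤
        (∫ x in Icc (0:ℝ) τ, x * g x) ∧
      lam * (∫ x in Ici (0:ℝ), g x * (if x ≤ τ then (1:ℝ) else 0)) =
        lam * ∫ x in Icc (0:ℝ) τ, g x := by
  have hIcc : MeasurableSet (Icc (0:ℝ) τ) := measurableSet_Icc
  have hIoi : MeasurableSet (Ioi τ) := measurableSet_Ioi
  have hsub1 : Icc (0:ℝ) τ ⊆ Ici 0 := Icc_subset_Ici_self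
  have hsub2 : Ioi τ ⊆ Ici (0:ℝ) := fun x hx => le_of_lt (hτ.trans hx)
  have hunion : Icc (0:ℝ) τ ∪ Ioi τ = Ici 0 := Icc_union_Ioi_eq_Ici hτ.le
  have hdisj : Disjoint (Icc (0:ℝ) τ) (Ioi τ) :=
    Set.disjoint_left.2 fun x hx hx' => absurd hx.2 (not_le.2 hx')
  refine ⟨?_, ?_, ?_⟩
  · intro γ hγ hγ01 hgγ hxgγ hcon
    have hgγ1 : IntegrableOn (fun x => g x * γ x) (Icc 0 τ) := hgγ.mono_set hsub1
    have hgγ2 : IntegrableOn (fun x => g x * γ x) (Ioi τ) := hgγ.mono_set hsub2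
    have hxgγ1 : IntegrableOn (fun x => x * g x * γ x) (Icc 0 τ) := hxgγ.mono_set hsub1
    have hxgγ2 : IntegrableOn (fun x => x * g x * γ x) (Ioi τ) := hxgγ.mono_set hsub2
    have hg1 : IntegrableOn g (Icc 0 τ) := hgint.mono_set hsub1
    have hxg1 : IntegrableOn (fun x => x * g x) (Icc 0 τ) := hxgint.mono_set hsub1
    have hsplitg : (∫ x in Ici (0:ℝ), g x * γ x)
        = (∫ x in Icc (0:ℝ) τ, g x * γ x) + ∫ x in Ioi τ, g x * γ x := by
      rw [← hunion, setIntegral_union hdisj hIoi hgγ1 hgγ2]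
    have hsplitx : (∫ x in Ici (0:ℝ), x * g x * γ x)
        = (∫ x in Icc (0:ℝ) τ, x * g x * γ x) + ∫ x in Ioi τ, x * g x * γ x := by
      rw [← hunion, setIntegral_union hdisj hIoi hxgγ1 hxgγ2]
    have h1 : τ * (∫ x in Ioi τ, g x * γ x) ≤ ∫ x in Ioi τ, x * g x * γ x := by
      rw [← integral_const_mul]
      refine setIntegral_mono_on (hgγ2.const_mul τ) hxgγ2 hIoi ?_
      intro x hx
      have hgγpos : 0 ≤ g x * γ x := mul_nonneg (hg x) (hγ01 x).1
      have hxτ : τ ≤ x := le_of_lt hx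
      calc τ * (g x * γ x) ≤ x * (g x * γ x) :=
            mul_le_mul_of_nonneg_right hxτ hgγpos
        _ = x * g x * γ x := (mul_assoc _ _ _).symm
    have h2 : (∫ x in Icc (0:ℝ) τ, x * g x) - (∫ x in Icc (0:ℝ) τ, x * g x * γ x)
        ≤ τ * ((∫ x in Icc (0:ℝ) τ, g x) - ∫ x in Icc (0:ℝ) τ, g x * γ x) := by
      rw [← integral_sub hxg1 hxgγ1, mul_sub, ← integral_const_mul, ← integral_const_mul,
        ← integral_sub (hg1.const_mul τ) (hgγ1.const_mul τ)]
      refine setIntegral_mono_on (hxg1.sub hxgγ1)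
        ((hg1.const_mul τ).sub (hgγ1.const_mul τ)) hIcc ?_
      intro x hx
      have h1γ : 0 ≤ g x * (1 - γ x) := mul_nonneg (hg x) (by linarith [(hγ01 x).2])
      have hkey : x * (g x * (1 - γ x)) ≤ τ * (g x * (1 - γ x)) :=
        mul_le_mul_of_nonneg_right hx.2 h1γ
      nlinarith [hkey]
    have hXB : (∫ x in Ioi τ, x * g x * γ x)
        ≤ (∫ x in Icc (0:ℝ) τ, x * g x) - ∫ x in Icc (0:ℝ) τ, x * g x * γ x := by
      rw [hsplitx] at hcon; linarith
    have key : (∫ x in Ioi τ, g x * γ x)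
        ≤ (∫ x in Icc (0:ℝ) τ, g x) - ∫ x in Icc (0:ℝ) τ, g x * γ x :=
      le_of_mul_le_mul_left (by linarith) hτ
    rw [hsplitg]
    exact mul_le_mul_of_nonneg_left (by linarith) hlam.le
  · have hrw : (fun x => x * g x * (if x ≤ τ then (1:ℝ) else 0))
        = (Iic τ).indicator (fun x => x * g x) := by
      funext x; by_cases h : x ≤ τ <;> simp [Set.indicator, h]
    rw [hrw, setIntegral_indicator measurableSet_Iic, Set.Ici_inter_Iic]
  · have hrw : (fun x => g x * (if x ≤ τ then (1:ℝ) else 0))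
        = (Iic τ).indicator g := by
      funext x; by_cases h : x ≤ τ <;> simp [Set.indicator, h]
    rw [hrw, setIntegral_indicator measurableSet_Iic, Set.Ici_inter_Iic]
end
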